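/- For the two-state CTMC and any δ > 0, the probability of two or more transitions in [0,δ] starting from state 1 satisfies 1 - (α e^{-βδ} - β e^{-αδ})/(α - β) ≤ (1/2)αβδ². -/

import Mathlib

/-!
Both sides vanish at `δ = 0`, and `g'(t) = αβ (e^{-βt} - e^{-αt}) / (α - β)`. Since `exp` is
`1`-Lipschitz on `(-∞, 0]`, this divided difference is at most `t`, so `g'(t) ≤ αβ t`, which is
the derivative of the right-hand side.
-/

open Real

lemma exp_sub_exp_le_sub_of_le_of_nonpos {x y : ℝ} (hxy : x ≤ y) (hy : y ≤ 0) :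
    exp y - exp x ≤ y - x := by
  have h_factor : exp y - exp x = exp y * (1 - exp (x - y)) := by
    rw [mul_sub, mul_one, ← exp_add, add_sub_cancel]
  have h_tangent : 1 - exp (x - y) ≤ y - x := by linarith [add_one_le_exp (x - y)]
  have h_nonneg : 0 ≤ 1 - exp (x - y) := by
    linarith [exp_le_one_iff.2 (sub_nonpos.2 hxy)]
  calc exp y - exp x = exp y * (1 - exp (x - y)) := h_factor
    _ ≤ 1 * (y - x) := mul_le_mul (exp_le_one_iff.2 hy) h_tangent h_nonneg zero_le_one
    _ = y - x := one_mul _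

lemma abs_exp_sub_exp_le_of_nonpos {x y : ℝ} (hx : x ≤ 0) (hy : y ≤ 0) :
    |exp x - exp y| ≤ |x - y| := by
  wlog hxy : x ≤ y generalizing x y
  · rw [abs_sub_comm, abs_sub_comm x]
    exact this hy hx (le_of_not_ge hxy)
  rw [abs_sub_comm, abs_sub_comm x, abs_of_nonneg (sub_nonneg.2 (exp_le_exp.2 hxy)),
    abs_of_nonneg (sub_nonneg.2 hxy)]
  exact exp_sub_exp_le_sub_of_le_of_nonpos hxy hy

lemma exp_neg_mul_sub_exp_neg_mul_div_sub_le {a b t : ℝ} (ha : 0 ≤ a) (hb : 0 ≤ b)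
    (ht : 0 ≤ t) : (exp (-b * t) - exp (-a * t)) / (a - b) ≤ t := by
  have h_lip : |exp (-b * t) - exp (-a * t)| ≤ t * |a - b| := by
    calc |exp (-b * t) - exp (-a * t)| ≤ |-b * t - -a * t| :=
          abs_exp_sub_exp_le_of_nonpos (by nlinarith) (by nlinarith)
      _ = t * |a - b| := by
          rw [show -b * t - -a * t = t * (a - b) by ring, abs_mul, abs_of_nonneg ht]
  calc (exp (-b * t) - exp (-a * t)) / (a - b)
      ≤ |exp (-b * t) - exp (-a * t)| / |a - b| := by rw [← abs_div]; exact le_abs_self _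
    _ ≤ t := div_le_of_le_mul₀ (abs_nonneg _) ht h_lip

/-- The function `g` of the paper, as a function of the interval length `t`. -/
noncomputable def probAtLeastTwoJumps (α β t : ℝ) : ℝ :=
  1 - (α * exp (-β * t) - β * exp (-α * t)) / (α - β)

lemma probAtLeastTwoJumps_zero {α β : ℝ} (hαβ : α ≠ β) : probAtLeastTwoJumps α β 0 = 0 := by
  simp [probAtLeastTwoJumps, div_self (sub_ne_zero.2 hαβ)]

lemma hasDerivAt_probAtLeastTwoJumps (α β t : ℝ) :
    HasDerivAt (probAtLeastTwoJumps α β)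
      (α * β * ((exp (-β * t) - exp (-α * t)) / (α - β))) t := by
  have hexp (c : ℝ) : HasDerivAt (fun s => exp (-c * s)) (exp (-c * t) * -c) t := by
    simpa using ((hasDerivAt_id t).const_mul (-c)).exp
  exact ((((hexp β).const_mul α).sub ((hexp α).const_mul β)).div_const (α - β)
    |>.const_sub 1).congr_deriv (by ring)

lemma probAtLeastTwoJumps_le {α β t : ℝ} (hα : 0 ≤ α) (hβ : 0 ≤ β) (hαβ : α ≠ β)
    (ht : 0 ≤ t) : probAtLeastTwoJumps α β t ≤ 1 / 2 * α * β * t ^ 2 := by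
  set F : ℝ → ℝ := fun s => 1 / 2 * α * β * s ^ 2 - probAtLeastTwoJumps α β s
  have hF (s : ℝ) : HasDerivAt F
      (α * β * (s - (exp (-β * s) - exp (-α * s)) / (α - β))) s :=
    (((hasDerivAt_pow 2 s).const_mul (1 / 2 * α * β)).sub
      (hasDerivAt_probAtLeastTwoJumps α β s)).congr_deriv (by ring)
  have hF_mono : MonotoneOn F (Set.Ici 0) := by
    refine monotoneOn_of_hasDerivWithinAt_nonneg (convex_Ici 0)
      (fun s _ => (hF s).continuousAt.continuousWithinAt)
      (fun s _ => (hF s).hasDerivWithinAt) fun s hs => ?_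
    rw [interior_Ici] at hs
    exact mul_nonneg (mul_nonneg hα hβ) (sub_nonneg.2
      (exp_neg_mul_sub_exp_neg_mul_div_sub_le hα hβ hs.le))
  have h := hF_mono Set.self_mem_Ici ht ht
  simp only [F, probAtLeastTwoJumps_zero hαβ] at h
  linarith

/-- For the two-state CTMC (rates `α` from state 1 and `β` from state 2) and any `δ > 0`,
the probability of two or more transitions in `[0, δ]` starting from state 1 satisfies
`1 - (α e^{-βδ} - β e^{-αδ})/(α - β) ≤ (1/2) α β δ²`. -/
theorem two_or_more_transitions_prob_le (α β δ : ℝ) (hα : 0 < α) (hβ : 0 < β)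
    (hαβ : α ≠ β) (hδ : 0 < δ) :
    1 - (α * exp (-β * δ) - β * exp (-α * δ)) / (α - β) ≤ (1 / 2) * α * β * δ ^ 2 :=
  probAtLeastTwoJumps_le hα.le hβ.le hαβ hδ.le
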